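/- arXiv:1901.03173 — 2 statements merged into one kernel-verified Lean document; each statement's English description precedes it below -/
import Mathlib

section
/- Let π_ℓ ∈ {0,1}^N be the indicator vector of the downstream-bus set N_ℓ of edge ℓ in a rooted tree, and let ρ_ℓ[k'] ∈ ℝ^N for k' in a finite index set K. If for every edge ℓ there exists k' ∈ K with π_ℓᵀ ρ_ℓ[k'] ≠ 0, then the block matrix Ψ whose (k',ℓ) block-column entry is 2 π_ℓ π_ℓᵀ ρ_ℓ[k'] (rows indexed by k' ∈ K stacked vertically) has full column rank L = N. -/
open scoped Classical

/-- A tree on vertices `{0, 1, ..., N}` rooted at `0`, with its `N` edges oriented away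
from the root.  `parent v` is the neighbor of `v` on the path towards the root, `depth`
certifies acyclicity, and `edgeRecv` labels each edge by its receiving (ending) vertex:
edge `ℓ` goes from `parent (recv ℓ)` (the sending end, closer to the root) to `recv ℓ`. -/
structure DistTree (N : ℕ) where
  parent : Fin (N + 1) → Fin (N + 1)
  depth : Fin (N + 1) → ℕ
  parent_root : parent 0 = 0
  depth_eq_zero_iff : ∀ v, depth v = 0 ↔ v = 0
  depth_parent : ∀ v, v ≠ 0 → depth (parent v) + 1 = depth v
  edgeRecv : Fin N ≃ {v : Fin (N + 1) // v ≠ 0}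

namespace DistTree

variable {N : ℕ}

/-- Receiving (ending) vertex of edge `ℓ`. -/
def recv (T : DistTree N) (ℓ : Fin N) : Fin (N + 1) := (T.edgeRecv ℓ).1

/-- Sending (starting) vertex of edge `ℓ`, the endpoint closer to the root. -/
def send (T : DistTree N) (ℓ : Fin N) : Fin (N + 1) := T.parent (T.recv ℓ)

/-- Edge `ℓ` lies on the unique path from the root to vertex `i`: both of its endpoints
appear consecutively on the ancestor sequence `i, parent i, parent² i, …` of `i`. -/
def onPath (T : DistTree N) (ℓ : Fin N) (i : Fin (N + 1)) : Prop :=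
  ∃ k : ℕ, T.parent^[k] i = T.recv ℓ ∧ T.parent^[k + 1] i = T.send ℓ

/-- Path matrix `P`: `P ℓ i = 1` if edge `ℓ` lies on the unique path from the root to the
non-root vertex `i.succ`, and `0` otherwise. -/
noncomputable def pathMatrix (T : DistTree N) : Matrix (Fin N) (Fin N) ℝ :=
  fun ℓ i => if T.onPath ℓ i.succ then 1 else 0

/-- Reduced incidence matrix `M` (node-to-edge incidence matrix with the root row removed):
`M i ℓ = 1` if edge `ℓ` starts at the non-root vertex `i.succ`, `-1` if it ends there,
and `0` otherwise. -/
noncomputable def incidence (T : DistTree N) : Matrix (Fin N) (Fin N) ℝ :=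
  fun i ℓ => if T.send ℓ = i.succ then 1 else if T.recv ℓ = i.succ then -1 else 0

end DistTree


namespace DistTree

variable {N : ℕ}

lemma parent_iterate_zero (T : DistTree N) (k : ℕ) : T.parent^[k] 0 = 0 :=
  Function.iterate_fixed T.parent_root k

lemma depth_of_iterate (T : DistTree N) :
    ∀ (k : ℕ) (i w : Fin (N + 1)), T.parent^[k] i = w → w ≠ 0 →
      T.depth i = T.depth w + k := by
  intro k
  induction k with
  | zero => intro i w h _; simp_all
  | succ k ih =>
      intro i w h hw
      have hi : i ≠ 0 := by
        rintro rfl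
        rw [T.parent_iterate_zero] at h
        exact hw h.symm
      rw [Function.iterate_succ_apply] at h
      have h1 := ih (T.parent i) w h hw
      have h2 := T.depth_parent i hi
      omega

lemma recv_ne_zero (T : DistTree N) (ℓ : Fin N) : T.recv ℓ ≠ 0 := (T.edgeRecv ℓ).2

lemma recv_injective (T : DistTree N) : Function.Injective T.recv := by
  intro a b hab
  exact T.edgeRecv.injective (Subtype.ext hab)

lemma onPath_recv (T : DistTree N) (ℓ : Fin N) : T.onPath ℓ (T.recv ℓ) :=
  ⟨0, rfl, by rw [Function.iterate_one]; rfl⟩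

lemma depth_lt_of_onPath (T : DistTree N) {m ℓ : Fin N}
    (hm : T.onPath m (T.recv ℓ)) (hne : m ≠ ℓ) :
    T.depth (T.recv m) < T.depth (T.recv ℓ) := by
  obtain ⟨k, hk, -⟩ := hm
  have hd := T.depth_of_iterate k (T.recv ℓ) (T.recv m) hk (T.recv_ne_zero m)
  have hk0 : k ≠ 0 := by
    rintro rfl
    exact hne (T.recv_injective (by simpa using hk)).symm
  omega

end DistTree

theorem psi_full_column_rank {N : ℕ} (T : DistTree N) (K : Type*) [Fintype K]
    (ρ : Fin N → K → Fin N → ℝ)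
    (h : ∀ ℓ : Fin N, ∃ k : K, (∑ i, T.pathMatrix ℓ i * ρ ℓ k i) ≠ 0) :
    LinearIndependent ℝ
      (fun ℓ : Fin N => fun ki : K × Fin N =>
        2 * T.pathMatrix ℓ ki.2 * ∑ i, T.pathMatrix ℓ i * ρ ℓ ki.1 i) := by

  classical
  rw [Fintype.linearIndependent_iff]
  intro c hc ℓ
  set s : Fin N → K → ℝ := fun m k => ∑ i, T.pathMatrix m i * ρ m k i with hs
  have hval : ∀ (k : K) (i : Fin N),
      (∑ m, c m * (2 * T.pathMatrix m i * s m k)) = 0 := by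
    intro k i
    have := congrFun hc (k, i)
    simpa [Finset.sum_apply, Pi.smul_apply, smul_eq_mul] using this
  suffices H : ∀ d : ℕ, ∀ m : Fin N, T.depth (T.recv m) < d → c m = 0 by
    exact H (T.depth (T.recv ℓ) + 1) ℓ (by omega)
  intro d
  induction d with
  | zero => intro m hm; omega
  | succ d ih =>
      intro m hm
      rcases Nat.lt_succ_iff_lt_or_eq.mp hm with hlt | heq
      · exact ih m hlt
      obtain ⟨k, hsk⟩ := h m
      have hi : ((T.recv m).pred (T.recv_ne_zero m)).succ = T.recv m :=
        Fin.succ_pred _ _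
      have hv := hval k ((T.recv m).pred (T.recv_ne_zero m))
      rw [Finset.sum_eq_single_of_mem m (Finset.mem_univ m)] at hv
      · have hP : T.pathMatrix m ((T.recv m).pred (T.recv_ne_zero m)) = 1 := by
          rw [DistTree.pathMatrix, if_pos]
          rw [hi]; exact T.onPath_recv m
        rw [hP] at hv
        have h0 : c m * (2 * s m k) = 0 := by linarith
        rcases mul_eq_zero.mp h0 with h1 | h1
        · exact h1
        · exact absurd (by linarith : s m k = 0) hsk
      · intro m' _ hne
        by_cases hp : T.onPath m' (((T.recv m).pred (T.recv_ne_zero m)).succ)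
        · have hlt' : T.depth (T.recv m') < d := by
            have := T.depth_lt_of_onPath (by rwa [hi] at hp) hne
            omega
          rw [ih m' hlt']; ring
        · have hz : T.pathMatrix m' ((T.recv m).pred (T.recv_ne_zero m)) = 0 := by
            rw [DistTree.pathMatrix, if_neg hp]
          rw [hz]; ring
end

section
/- The identifiability condition: the parameter x_ℓ of edge ℓ is identifiable from the regression min_x Σ_{k'∈K} ‖Ψ[k'] x − ψ[k']‖² if and only if there exists k' ∈ K such that Σ_{i ∈ N_ℓ} (z_ℓ p_i[k'] + q_i[k']) ≠ 0, where N_ℓ is the downstream-bus set of edge ℓ; equivalently, the stacked regressor matrix has full column rank if and only if this condition holds for every ℓ. -/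
open scoped Classical

namespace DistTree

variable {N : ℕ}

lemma depth_iterate (T : DistTree N) (v : Fin (N + 1)) :
    ∀ k : ℕ, T.parent^[k] v ≠ 0 → T.depth (T.parent^[k] v) + k = T.depth v := by
  intro k
  induction k with
  | zero => intro _; simp
  | succ k ih =>
    intro h
    rw [Function.iterate_succ_apply'] at h ⊢
    have hk : T.parent^[k] v ≠ 0 := by
      intro h0
      rw [h0, T.parent_root] at h
      exact h rfl
    have h1 := T.depth_parent _ hk
    have h2 := ih hk
    omega

lemma onPath_depth (T : DistTree N) (ℓ : Fin N) (v : Fin (N + 1))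
    (h : T.onPath ℓ v) :
    T.depth (T.recv ℓ) ≤ T.depth v ∧
      (T.depth (T.recv ℓ) = T.depth v → T.recv ℓ = v) := by
  obtain ⟨k, h1, _⟩ := h
  have hne : T.parent^[k] v ≠ 0 := by rw [h1]; exact T.recv_ne_zero ℓ
  have := T.depth_iterate v k hne
  rw [h1] at this
  constructor
  · omega
  · intro he
    have hk0 : k = 0 := by omega
    rw [hk0] at h1
    simpa using h1.symm

end DistTree

theorem identifiability_iff {N : ℕ} (T : DistTree N) (K : Type*) [Fintype K]
    (z : Fin N → ℝ) (hz : ∀ ℓ, 0 < z ℓ) (p q : K → Fin N → ℝ) :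
    LinearIndependent ℝ
      (fun ℓ : Fin N => fun ki : K × Fin N =>
        2 * T.pathMatrix ℓ ki.2 *
          ∑ i, T.pathMatrix ℓ i * (z ℓ * p ki.1 i + q ki.1 i)) ↔
    ∀ ℓ : Fin N, ∃ k : K,
      (∑ i ∈ Finset.univ.filter (fun i : Fin N => T.onPath ℓ i.succ),
        (z ℓ * p k i + q k i)) ≠ 0 := by
  classical
  have hSfilter : ∀ (ℓ : Fin N) (k : K),
      (∑ i, T.pathMatrix ℓ i * (z ℓ * p k i + q k i)) =
      ∑ i ∈ Finset.univ.filter (fun i : Fin N => T.onPath ℓ i.succ),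
        (z ℓ * p k i + q k i) := by
    intro ℓ k
    rw [Finset.sum_filter]
    refine Finset.sum_congr rfl fun i _ => ?_
    by_cases h : T.onPath ℓ i.succ <;> simp [DistTree.pathMatrix, h]
  constructor
  · intro hli ℓ
    by_contra h
    push_neg at h
    apply hli.ne_zero ℓ
    funext ki
    rw [hSfilter ℓ ki.1, h ki.1]
    simp
  · intro hcond
    rw [Fintype.linearIndependent_iff]
    intro c hc
    have hc' : ∀ (k : K) (i : Fin N),
        (∑ ℓ, c ℓ * (2 * T.pathMatrix ℓ i *
          ∑ j, T.pathMatrix ℓ j * (z ℓ * p k j + q k j))) = 0 := by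
      intro k i
      have := congrFun hc (k, i)
      simpa using this
    have key : ∀ n : ℕ, ∀ ℓ : Fin N, T.depth (T.recv ℓ) = n → c ℓ = 0 := by
      intro n
      induction n using Nat.strong_induction_on with
      | _ n ih =>
        intro ℓ₀ hn
        obtain ⟨k, hk⟩ := hcond ℓ₀
        have hne : T.recv ℓ₀ ≠ 0 := T.recv_ne_zero ℓ₀
        set i₀ : Fin N := (T.recv ℓ₀).pred hne with hi₀
        have hsucc : i₀.succ = T.recv ℓ₀ := Fin.succ_pred _ hne
        have heq := hc' k i₀
        rw [Finset.sum_eq_single ℓ₀] at heq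
        · have hP : T.pathMatrix ℓ₀ i₀ = 1 := by
            simp [DistTree.pathMatrix, hsucc, T.onPath_recv ℓ₀]
          rw [hP, hSfilter ℓ₀ k] at heq
          have h2 : (2 : ℝ) * 1 *
              (∑ i ∈ Finset.univ.filter (fun i : Fin N => T.onPath ℓ₀ i.succ),
                (z ℓ₀ * p k i + q k i)) ≠ 0 := by
            intro h0
            apply hk
            have : (2 : ℝ) * 1 ≠ 0 := by norm_num
            exact (mul_eq_zero.mp h0).resolve_left this
          exact (mul_eq_zero.mp heq).resolve_right h2
        · intro ℓ _ hℓ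
          by_cases hp : T.onPath ℓ i₀.succ
          · rw [hsucc] at hp
            obtain ⟨hle, heq'⟩ := T.onPath_depth ℓ _ hp
            have hlt : T.depth (T.recv ℓ) < n := by
              rcases lt_or_eq_of_le hle with h | h
              · omega
              · exact absurd (T.edgeRecv.injective (Subtype.ext (heq' (by omega)))) hℓ
            rw [ih _ hlt ℓ rfl, zero_mul]
          · simp [DistTree.pathMatrix, hp]
        · intro h
          exact absurd (Finset.mem_univ ℓ₀) h
    intro ℓ
    exact key _ ℓ rfl
end
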